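/- Let (X,r) be a finite left non-degenerate set-theoretic solution of the Yang–Baxter equation, K a field, M = M(X,r) and S = Soc(M). Then K[M] is right Noetherian if and only if K[S] is right Noetherian. -/

import Mathlib

open scoped Pointwise ENNReal

namespace YBE

variable {X : Type*}

/-- `r` acting on the first two coordinates of a triple. -/
def r12 (r : X × X → X × X) : X × X × X → X × X × X :=
  fun p => ((r (p.1, p.2.1)).1, (r (p.1, p.2.1)).2, p.2.2)

/-- `r` acting on the last two coordinates of a triple. -/
def r23 (r : X × X → X × X) : X × X × X → X × X × X :=
  fun p => (p.1, r (p.2.1, p.2.2))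

/-- `(X, r)` is a set-theoretic solution of the Yang–Baxter equation. -/
def IsYB (r : X × X → X × X) : Prop :=
  r12 r ∘ r23 r ∘ r12 r = r23 r ∘ r12 r ∘ r23 r

/-- The map `λ_x`, i.e. `r (x, y) = (λ_x y, ρ_y x)`. -/
def lmap (r : X × X → X × X) (x y : X) : X := (r (x, y)).1

/-- The map `ρ_y`, i.e. `r (x, y) = (λ_x y, ρ_y x)`. -/
def rmap (r : X × X → X × X) (y x : X) : X := (r (x, y)).2

/-- A solution is left non-degenerate when all maps `λ_x` are bijective. -/
def LeftNonDeg (r : X × X → X × X) : Prop := ∀ x, Function.Bijective (lmap r x)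

/-- A solution is non-degenerate when all `λ_x` and all `ρ_y` are bijective. -/
def NonDeg (r : X × X → X × X) : Prop :=
  (∀ x, Function.Bijective (lmap r x)) ∧ (∀ y, Function.Bijective fun x => rmap r y x)

/-- A classical inverse of a self-map of `X` (the inverse map when the map is bijective). -/
noncomputable def pinv (f : X → X) (y : X) : X :=
  letI := Classical.propDecidable (∃ x, f x = y)
  if h : ∃ x, f x = y then h.choose else y

/-- `σ_x (y) = λ_x (ρ_{λ_y⁻¹(x)} (y))`. -/
noncomputable def sigmaMap (r : X × X → X × X) (x y : X) : X :=
  lmap r x (rmap r (pinv (lmap r y) x) y)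

/-- The left derived solution `s (x, y) = (y, σ_y (x))`. -/
noncomputable def dmap (r : X × X → X × X) : X × X → X × X :=
  fun p => (p.2, sigmaMap r p.2 p.1)

/-- The defining relations `x ∘ y = λ_x(y) ∘ ρ_y(x)` of the structure monoid. -/
def structRel (r : X × X → X × X) : FreeMonoid X → FreeMonoid X → Prop :=
  fun w₁ w₂ => ∃ x y : X,
    w₁ = FreeMonoid.of x * FreeMonoid.of y ∧
    w₂ = FreeMonoid.of (lmap r x y) * FreeMonoid.of (rmap r y x)

/-- The congruence generated by the defining relations of the structure monoid. -/
def structCon (r : X × X → X × X) : Con (FreeMonoid X) := conGen (structRel r)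

/-- The structure monoid `M(X,r)`.  The left derived structure monoid `A(X,r)` is
`SM (dmap r)`, the structure monoid of the left derived solution. -/
abbrev SM (r : X × X → X × X) : Type _ := (structCon r).Quotient

/-- The canonical generators of the structure monoid. -/
def gen (r : X × X → X × X) (x : X) : SM r := (structCon r).mk' (FreeMonoid.of x)

/-- The extension of `λ` to the free monoid, with values in the monoid of self-maps of `X`. -/
def lamFree (r : X × X → X × X) : FreeMonoid X →* Function.End X :=
  FreeMonoid.lift fun x => (lmap r x : Function.End X)

theorem lmap_lmap {r : X × X → X × X} (h : IsYB r) (x y z : X) :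
    lmap r (lmap r x y) (lmap r (rmap r y x) z) = lmap r x (lmap r y z) :=
  congrArg (fun p : X × X × X => p.1) (congrFun h (x, y, z))

theorem structCon_le_ker_lamFree {r : X × X → X × X} (h : IsYB r) :
    structCon r ≤ Con.ker (lamFree r) := by
  refine Con.conGen_le.mpr ?_
  rintro w₁ w₂ ⟨x, y, rfl, rfl⟩
  refine (Con.ker_rel _).mpr ?_
  simp only [map_mul]
  simp only [lamFree, FreeMonoid.lift_eval_of]
  funext z
  exact (lmap_lmap h x y z).symm

/-- The extension of `λ` to the structure monoid `M(X,r)` (a monoid homomorphism to the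
monoid of self-maps of `X`). -/
def lam {r : X × X → X × X} (h : IsYB r) : SM r →* Function.End X :=
  Con.lift _ (lamFree r) (structCon_le_ker_lamFree h)

/-- The relators of the structure group `G(X,r)`. -/
def structRelators (r : X × X → X × X) : Set (FreeGroup X) :=
  {w | ∃ x y : X, w = FreeGroup.of x * FreeGroup.of y *
    (FreeGroup.of (lmap r x y) * FreeGroup.of (rmap r y x))⁻¹}

/-- The structure group `G(X,r)`. -/
abbrev SG (r : X × X → X × X) : Type _ := PresentedGroup (structRelators r)

def toSGfree (r : X × X → X × X) : FreeMonoid X →* SG r :=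
  FreeMonoid.lift fun x => PresentedGroup.of x

theorem structCon_le_ker_toSGfree (r : X × X → X × X) :
    structCon r ≤ Con.ker (toSGfree r) := by
  refine Con.conGen_le.mpr ?_
  rintro w₁ w₂ ⟨x, y, rfl, rfl⟩
  refine (Con.ker_rel _).mpr ?_
  simp only [map_mul, toSGfree, FreeMonoid.lift_eval_of]
  have hmem : FreeGroup.of x * FreeGroup.of y *
      (FreeGroup.of (lmap r x y) * FreeGroup.of (rmap r y x))⁻¹ ∈
      Subgroup.normalClosure (structRelators r) :=
    Subgroup.subset_normalClosure ⟨x, y, rfl⟩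
  show ((FreeGroup.of x * FreeGroup.of y : FreeGroup X) :
      FreeGroup X ⧸ Subgroup.normalClosure (structRelators r)) =
    ((FreeGroup.of (lmap r x y) * FreeGroup.of (rmap r y x) : FreeGroup X) :
      FreeGroup X ⧸ Subgroup.normalClosure (structRelators r))
  rw [QuotientGroup.eq]
  have hconj := (Subgroup.normalClosure_normal (s := structRelators r)).conj_mem _
    (Subgroup.inv_mem _ hmem) (FreeGroup.of x * FreeGroup.of y)⁻¹
  have heq : (FreeGroup.of x * FreeGroup.of y)⁻¹ *
      (FreeGroup.of (lmap r x y) * FreeGroup.of (rmap r y x)) =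
      (FreeGroup.of x * FreeGroup.of y)⁻¹ *
        (FreeGroup.of x * FreeGroup.of y *
          (FreeGroup.of (lmap r x y) * FreeGroup.of (rmap r y x))⁻¹)⁻¹ *
        ((FreeGroup.of x * FreeGroup.of y)⁻¹)⁻¹ := by group
  rw [heq]
  exact hconj

/-- The canonical monoid homomorphism from the structure monoid to the structure group. -/
def toSG (r : X × X → X × X) : SM r →* SG r :=
  Con.lift _ (toSGfree r) (structCon_le_ker_toSGfree r)

/-- `t` left divides `s`. -/
def LDvd {M : Type*} [Monoid M] (t s : M) : Prop := s = t ∨ ∃ u, s = t * u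

/-- The set of elements of `M(X,r)` that are left divisible by at least `i` distinct
generators. -/
def MsetGE (r : X × X → X × X) (i : ℕ) : Set (SM r) :=
  {m | ∃ Y : Finset X, i ≤ Y.card ∧ ∀ x ∈ Y, LDvd (gen r x) m}

/-- The set `M_{YZ}` for subsets `Y, Z` of `X` (of the same cardinality). -/
def MYZ {r : X × X → X × X} (h : IsYB r) (Y Z : Finset X) : Set (SM r) :=
  {m | m ∉ MsetGE r (Y.card + 1) ∧ (∀ x ∈ Y, LDvd (gen r x) m) ∧
    lam h m '' (Z : Set X) = (Y : Set X)}

/-- The set `M_{XX}` of elements left divisible by all generators. -/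
def MXX (r : X × X → X × X) : Set (SM r) := {m | ∀ x : X, LDvd (gen r x) m}

/-- The set `A_{YY}` inside the left derived structure monoid. -/
def AYY (r : X × X → X × X) (Y : Finset X) : Set (SM (dmap r)) :=
  {a | a ∉ MsetGE (dmap r) (Y.card + 1) ∧ ∀ y ∈ Y, LDvd (gen (dmap r) y) a}

/-- A subset of a magma is cancellative (as a semigroup). -/
def IsCancellativeSet {M : Type*} [Mul M] (S : Set M) : Prop :=
  (∀ a ∈ S, ∀ b ∈ S, ∀ c ∈ S, a * c = b * c → a = b) ∧
  (∀ a ∈ S, ∀ b ∈ S, ∀ c ∈ S, c * a = c * b → a = b)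

/-- A nonempty multiplicatively closed subset, i.e. a nonempty subsemigroup. -/
def IsNonemptySubsemigroup {M : Type*} [Mul M] (S : Set M) : Prop :=
  S.Nonempty ∧ ∀ a ∈ S, ∀ b ∈ S, a * b ∈ S

/-- A cancellative magma/monoid. -/
def Cancellative (M : Type*) [Mul M] : Prop :=
  (∀ a b c : M, a * b = a * c → b = c) ∧ (∀ a b c : M, b * a = c * a → b = c)

def IsRightIdealM {M : Type*} [Monoid M] (I : Set M) : Prop :=
  I.Nonempty ∧ ∀ a ∈ I, ∀ s : M, a * s ∈ I

def IsLeftIdealM {M : Type*} [Monoid M] (I : Set M) : Prop :=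
  I.Nonempty ∧ ∀ a ∈ I, ∀ s : M, s * a ∈ I

/-- Ascending chain condition on right ideals of a monoid. -/
def ACCRight (M : Type*) [Monoid M] : Prop :=
  ∀ f : ℕ → Set M, (∀ n, IsRightIdealM (f n)) → Monotone f → ∃ n, ∀ m, n ≤ m → f m = f n

/-- Ascending chain condition on left ideals of a monoid. -/
def ACCLeft (M : Type*) [Monoid M] : Prop :=
  ∀ f : ℕ → Set M, (∀ n, IsLeftIdealM (f n)) → Monotone f → ∃ n, ∀ m, n ≤ m → f m = f n

/-- Left Noetherian ring: ascending chain condition on left ideals. -/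
abbrev LeftNoetherian (R : Type*) [Ring R] : Prop := IsNoetherianRing R

/-- Right Noetherian ring: ascending chain condition on right ideals, i.e. the opposite
ring is left Noetherian. -/
abbrev RightNoetherian (R : Type*) [Ring R] : Prop := IsNoetherianRing Rᵐᵒᵖ

/-- A prime ring: the product of two nonzero two-sided ideals is nonzero; elementwise,
`a R b = 0` implies `a = 0` or `b = 0`. -/
def IsPrimeRing (R : Type*) [Ring R] : Prop :=
  ∀ a b : R, (∀ x : R, a * x * b = 0) → a = 0 ∨ b = 0

/-- A semiprime ring: no nonzero nilpotent two-sided ideal; elementwise, `a R a = 0`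
implies `a = 0`. -/
def IsSemiprimeRing (R : Type*) [NonUnitalNonAssocSemiring R] : Prop :=
  ∀ a : R, (∀ x : R, a * x * a = 0) → a = 0

/-- `S` is nil modulo the ideal `I`, i.e. the image of `S` in the Rees factor by `I`
is a nil semigroup. -/
def NilModulo {M : Type*} [Monoid M] (S I : Set M) : Prop :=
  ∀ a ∈ S, ∃ k : ℕ, 0 < k ∧ a ^ k ∈ I

/-- The socle of the structure monoid: elements with trivial `λ`-map. -/
def Soc {r : X × X → X × X} (h : IsYB r) : Submonoid (SM r) := MonoidHom.mker (lam h)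

/-- The Gelfand–Kirillov dimension of a `K`-algebra `R`:
`sup` over finitely generated subspaces `V` of `limsup_n log_n (dim_K Vⁿ)`. -/
noncomputable def GKdim (K R : Type*) [Field K] [Ring R] [Algebra K R] : ℝ≥0∞ :=
  ⨆ (V : Submodule K R) (_ : V.FG),
    Filter.limsup
      (fun n : ℕ => ENNReal.ofReal (Real.logb n (Module.finrank K ↥(V ^ n))))
      Filter.atTop

/-- A prime two-sided ideal of a ring. -/
def IsPrimeTwoSided {R : Type*} [Ring R] (P : TwoSidedIdeal R) : Prop :=
  (P : Set R) ≠ Set.univ ∧ ∀ a b : R, (∀ x : R, a * x * b ∈ P) → a ∈ P ∨ b ∈ P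

/-- The classical Krull dimension of a ring: the supremum of lengths of chains of
prime two-sided ideals. -/
noncomputable def clKdim (R : Type*) [Ring R] : WithBot ℕ∞ :=
  Order.krullDim {P : TwoSidedIdeal R // IsPrimeTwoSided P}

/-- The (sub)semigroup `S` has a group of fractions which is abelian-by-finite. -/
def HasAbelianByFiniteGroupOfFractions {M : Type} [Monoid M] (S : Set M) : Prop :=
  ∃ (G : Type) (_ : Group G) (φ : M → G),
    Set.InjOn φ S ∧
    (∀ a ∈ S, ∀ b ∈ S, φ (a * b) = φ a * φ b) ∧
    (∀ g : G, ∃ a ∈ S, ∃ b ∈ S, g = φ a * (φ b)⁻¹) ∧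
    (∀ g : G, ∃ a ∈ S, ∃ b ∈ S, g = (φ a)⁻¹ * φ b) ∧
    ∃ H : Subgroup G, (∀ x y : ↥H, x * y = y * x) ∧ H.FiniteIndex

/-- `R` is a PI-algebra over `K`: it satisfies a nonzero polynomial identity. -/
def IsPIAlgebra (K R : Type*) [CommSemiring K] [Semiring R] [Algebra K R] : Prop :=
  ∃ (n : ℕ) (f : FreeAlgebra K (Fin n)), f ≠ 0 ∧ ∀ φ : FreeAlgebra K (Fin n) →ₐ[K] R, φ f = 0

/-- `λ_x` as an element of the monoid of self-maps of `X`. -/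
def lamEnd (r : X × X → X × X) (x : X) : Function.End X := lmap r x

/-- `σ_x` as an element of the monoid of self-maps of `X`. -/
noncomputable def sigEnd (r : X × X → X × X) (x : X) : Function.End X := sigmaMap r x

/-- A two-sided ideal of a monoid. -/
def IsIdealM {A : Type*} [Monoid A] (I : Set A) : Prop :=
  I.Nonempty ∧ ∀ a ∈ I, ∀ s : A, a * s ∈ I ∧ s * a ∈ I

/-- A prime ideal of a monoid. -/
def IsPrimeIdealM {A : Type*} [Monoid A] (P : Set A) : Prop :=
  IsIdealM P ∧ P ≠ Set.univ ∧ ∀ a b : A, (∀ s : A, a * s * b ∈ P) → a ∈ P ∨ b ∈ P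

/-- The family `𝒵(X,r)` of proper nonempty `σ`-invariant subsets of `X`. -/
def ZFam (r : X × X → X × X) : Set (Set X) :=
  {Z | Z.Nonempty ∧ Z ≠ Set.univ ∧
    ∀ x ∉ Z, (∀ z ∈ Z, sigmaMap r x z ∈ Z) ∧ ∀ y ∉ Z, sigmaMap r x y ∉ Z}

/-- The ideal `P(Z) = ⋃_{z ∈ Z} (z + A)` of the left derived structure monoid. -/
def PZ (r : X × X → X × X) (Z : Set X) : Set (SM (dmap r)) :=
  {a | ∃ z ∈ Z, ∃ b, a = gen (dmap r) z * b}

/-- The monoid `Σ_Z = ⟨σ_x : x ∈ X \ Z⟩` of self-maps of `X`. -/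
noncomputable def SigClosure (r : X × X → X × X) (Z : Set X) : Submonoid (Function.End X) :=
  Submonoid.closure {f : Function.End X | ∃ x ∈ Zᶜ, f = sigmaMap r x}

/-- `t(Z)`: the number of orbits of `X \ Z` under the action of `Σ_Z`. -/
noncomputable def tOrb (r : X × X → X × X) (Z : Set X) : ℕ :=
  Nat.card (Quot fun a b : ↥(Zᶜ) =>
    ∃ s ∈ SigClosure r Z, ∃ t ∈ SigClosure r Z, s (a : X) = t (b : X))

/-- `z_κ = v·x_{κ(1)} + ⋯ + v·x_{κ(n)}` in the left derived structure monoid. -/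
noncomputable def zkappa (r : X × X → X × X) {n : ℕ} (en : Fin n ≃ X) (v : ℕ)
    (κ : Equiv.Perm (Fin n)) : SM (dmap r) :=
  ((List.finRange n).map fun i => gen (dmap r) (en (κ i)) ^ v).prod

/-- `z_id = v·x_1 + ⋯ + v·x_n` in the left derived structure monoid. -/
noncomputable def zid (r : X × X → X × X) {n : ℕ} (en : Fin n ≃ X) (v : ℕ) : SM (dmap r) :=
  zkappa r en v 1

/-- The diagonal map of `M(X,r)` with values in `A(X,r)`: `q(m) = λ_m⁻¹(π(m))`, expressed
through a bijective `1`-cocycle `π` and the extension `Λ` of `λ` to automorphisms of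
`A(X,r)`. -/
noncomputable def qelt (r : X × X → X × X) (π : SM r ≃ SM (dmap r))
    (Λ : SM r →* MulAut (SM (dmap r))) (m : SM r) : SM (dmap r) :=
  (Λ m)⁻¹ (π m)

/-- The subset `Ω_λ = {(z,λ_z) ∘ (e·q(z_id), id)⁻¹ : z ∈ O_λ(e·q(z_id))}` of the structure
group, where `O_λ(e·q(z_id))` is the orbit of `e·q(z_id)` under `⟨λ_x : x ∈ X⟩`. -/
noncomputable def OmegaSet (r : X × X → X × X) (π : SM r ≃ SM (dmap r))
    (Λ : SM r →* MulAut (SM (dmap r))) {n : ℕ} (en : Fin n ≃ X) (v e : ℕ) : Set (SG r) :=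
  {g | ∃ a : SM r,
    g = toSG r (π.symm (Λ a (qelt r π Λ (π.symm (zid r en v)) ^ e))) *
        (toSG r (π.symm (qelt r π Λ (π.symm (zid r en v)) ^ e)))⁻¹}

/-- The image `X̄` of `X` in the quotient of the left derived structure monoid by a
congruence `c`. -/
def XBar (r : X × X → X × X) (c : Con (SM (dmap r))) : Set c.Quotient :=
  Set.range fun x : X => c.mk' (gen (dmap r) x)

/-- A regular element of a ring (neither a left nor a right zero-divisor). -/
def IsRegularElem {R : Type*} [Ring R] (s : R) : Prop :=
  (∀ x, s * x = 0 → x = 0) ∧ (∀ x, x * s = 0 → x = 0)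

/-- `j : R →+* Q` realizes `Q` as the classical (right) ring of quotients of `R`. -/
def IsClassicalRightQuotientRing {R Q : Type*} [Ring R] [Ring Q] (j : R →+* Q) : Prop :=
  Function.Injective j ∧ (∀ s : R, IsRegularElem s → IsUnit (j s)) ∧
  ∀ q : Q, ∃ a s : R, IsRegularElem s ∧ q * j s = j a


section Core
variable {X : Type} [Fintype X] {r : X × X → X × X}

private lemma lam_mk (hr : IsYB r) (w : FreeMonoid X) :
    lam hr ((structCon r).mk' w) = lamFree r w := Con.lift_mk' _ w

private lemma lam_gen (hr : IsYB r) (x : X) : lam hr (gen r x) = lmap r x := by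
  rw [gen, lam_mk hr]
  exact FreeMonoid.lift_eval_of _ x

private lemma gen_rel (x y : X) :
    gen r x * gen r y = gen r (lmap r x y) * gen r (rmap r y x) := by
  have h : structCon r (FreeMonoid.of x * FreeMonoid.of y)
      (FreeMonoid.of (lmap r x y) * FreeMonoid.of (rmap r y x)) :=
    ConGen.Rel.of _ _ ⟨x, y, rfl, rfl⟩
  simpa [gen, map_mul] using (Con.eq (structCon r)).mpr h

private lemma lam_bijective (hr : IsYB r) (hlnd : LeftNonDeg r) (m : SM r) :
    Function.Bijective (lam hr m) := by
  induction m using Con.induction_on with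
  | _ w =>
    rw [show (w : SM r) = (structCon r).mk' w from rfl, lam_mk hr]
    induction w using FreeMonoid.recOn with
    | one => rw [map_one]; exact Function.bijective_id
    | of_mul x xs ih =>
      rw [map_mul]
      have h1 : lamFree r (FreeMonoid.of x) = lmap r x := FreeMonoid.lift_eval_of _ x
      rw [h1]
      exact Function.Bijective.comp (hlnd x) ih

/-- pull a generator through: `m * y = λ_m(y) * m'`. -/
private lemma pull_gen (hr : IsYB r) (m : SM r) (y : X) :
    ∃ m', m * gen r y = gen r (lam hr m y) * m' := by
  induction m using Con.induction_on with
  | _ w =>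
    induction w using FreeMonoid.recOn with
    | one =>
      refine ⟨1, ?_⟩
      have : ((1 : FreeMonoid X) : SM r) = 1 := rfl
      rw [this, one_mul, map_one, mul_one]
      rw [show (1 : Function.End X) y = y from rfl]
    | of_mul x xs ih =>
      obtain ⟨m', hm'⟩ := ih
      have hcoe : ((FreeMonoid.of x * xs : FreeMonoid X) : SM r) = gen r x * (xs : SM r) := rfl
      set z := lam hr ((xs : SM r)) y with hz
      refine ⟨gen r (rmap r z x) * m', ?_⟩
      have hlam : lam hr (gen r x * (xs : SM r)) y = lmap r x z := by
        rw [map_mul, lam_gen hr]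
        rfl
      rw [hcoe, hlam, mul_assoc, hm', ← mul_assoc, gen_rel, mul_assoc]

/-- socle elements move to the right past anything. -/
private lemma socle_comm (hr : IsYB r) (hlnd : LeftNonDeg r) (m : SM r) :
    ∀ s : SM r, lam hr s = 1 → ∃ s', lam hr s' = 1 ∧ s * m = m * s' := by
  induction m using Con.induction_on with
  | _ w =>
    induction w using FreeMonoid.recOn with
    | one =>
      intro s hs
      exact ⟨s, hs, by rw [show ((1 : FreeMonoid X) : SM r) = 1 from rfl, mul_one, one_mul]⟩
    | of_mul x xs ih =>
      intro s hs
      obtain ⟨t, ht⟩ := pull_gen hr s x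
      have hsx : lam hr s x = x := by rw [hs]; rfl
      rw [hsx] at ht
      have h1 : lam hr s * lam hr (gen r x) = lam hr (gen r x) * lam hr t := by
        rw [← map_mul, ← map_mul, ht]
      rw [hs, one_mul, lam_gen hr] at h1
      have ht1 : lam hr t = 1 := by
        funext u
        show lam hr t u = u
        exact ((hlnd x).1 (congrFun h1 u)).symm
      obtain ⟨s', hs', hcomm⟩ := ih t ht1
      refine ⟨s', hs', ?_⟩
      have hcoe : ((FreeMonoid.of x * xs : FreeMonoid X) : SM r) = gen r x * (xs : SM r) := rfl
      rw [hcoe, ← mul_assoc, ht, mul_assoc, hcomm, ← mul_assoc]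


/-- every element of the structure monoid is a bounded-length word times a socle element. -/
private lemma decomp_aux (hr : IsYB r) (hlnd : LeftNonDeg r) :
    ∀ (n : ℕ) (w : List X), w.length ≤ n →
    ∃ (u : List X) (s : SM r), u.length < Nat.card (X → X) ∧ lam hr s = 1 ∧
      (structCon r).mk' (FreeMonoid.ofList w) = (structCon r).mk' (FreeMonoid.ofList u) * s := by
  haveI : Nonempty (X → X) := ⟨id⟩
  have hN : 0 < Nat.card (X → X) := Nat.card_pos
  intro n
  induction n with
  | zero =>
    intro w hw
    exact ⟨w, 1, by omega, map_one _, (mul_one _).symm⟩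
  | succ n IH =>
    intro w hw
    by_cases hlen : w.length < Nat.card (X → X)
    · exact ⟨w, 1, hlen, map_one _, (mul_one _).symm⟩
    · push_neg at hlen
      have key : ∀ a b : ℕ, a < b → b ≤ w.length →
          lam hr ((structCon r).mk' (FreeMonoid.ofList (w.drop a))) =
            lam hr ((structCon r).mk' (FreeMonoid.ofList (w.drop b))) →
          ∃ w' : List X, w'.length < w.length ∧ ∃ s₁ : SM r, lam hr s₁ = 1 ∧
            (structCon r).mk' (FreeMonoid.ofList w) =
              (structCon r).mk' (FreeMonoid.ofList w') * s₁ := by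
        intro a b hab hbw hlameq
        set c : List X := (w.drop a).take (b - a) with hc
        have hdrop : w.drop a = c ++ w.drop b := by
          conv_lhs => rw [← List.take_append_drop (b - a) (w.drop a)]
          rw [List.drop_drop, hc]
          congr 2
          omega
        have hsplit : (structCon r).mk' (FreeMonoid.ofList (w.drop a)) =
            (structCon r).mk' (FreeMonoid.ofList c) *
              (structCon r).mk' (FreeMonoid.ofList (w.drop b)) := by
          rw [hdrop, FreeMonoid.ofList_append, map_mul]
        have hg := lam_bijective hr hlnd ((structCon r).mk' (FreeMonoid.ofList (w.drop b)))
        have hlamc : lam hr ((structCon r).mk' (FreeMonoid.ofList c)) = 1 := by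
          have h2 : lam hr ((structCon r).mk' (FreeMonoid.ofList c)) *
              lam hr ((structCon r).mk' (FreeMonoid.ofList (w.drop b))) =
              lam hr ((structCon r).mk' (FreeMonoid.ofList (w.drop b))) := by
            rw [← map_mul, ← hsplit, hlameq]
          funext y
          show lam hr ((structCon r).mk' (FreeMonoid.ofList c)) y = y
          obtain ⟨z, hz⟩ := hg.2 y
          rw [← hz]
          exact congrFun h2 z
        obtain ⟨s₁, hs₁, hcomm⟩ :=
          socle_comm hr hlnd ((structCon r).mk' (FreeMonoid.ofList (w.drop b))) _ hlamc
        refine ⟨w.take a ++ w.drop b, ?_, s₁, hs₁, ?_⟩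
        · rw [List.length_append, List.length_take, List.length_drop]
          have : min a w.length = a := Nat.min_eq_left (by omega)
          omega
        · calc (structCon r).mk' (FreeMonoid.ofList w)
              = (structCon r).mk' (FreeMonoid.ofList (w.take a)) *
                  (structCon r).mk' (FreeMonoid.ofList (w.drop a)) := by
                rw [← map_mul, ← FreeMonoid.ofList_append, List.take_append_drop]
            _ = (structCon r).mk' (FreeMonoid.ofList (w.take a)) *
                  ((structCon r).mk' (FreeMonoid.ofList c) *
                    (structCon r).mk' (FreeMonoid.ofList (w.drop b))) := by rw [hsplit]
            _ = (structCon r).mk' (FreeMonoid.ofList (w.take a)) *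
                  ((structCon r).mk' (FreeMonoid.ofList (w.drop b)) * s₁) := by rw [hcomm]
            _ = ((structCon r).mk' (FreeMonoid.ofList (w.take a)) *
                  (structCon r).mk' (FreeMonoid.ofList (w.drop b))) * s₁ := by rw [mul_assoc]
            _ = (structCon r).mk' (FreeMonoid.ofList (w.take a ++ w.drop b)) * s₁ := by
                rw [← map_mul, ← FreeMonoid.ofList_append]
      classical
      haveI : Finite (Function.End X) := by
        show Finite (X → X)
        infer_instance
      haveI : Fintype (Function.End X) := Fintype.ofFinite _
      have hxx : Fintype.card (Function.End X) = Nat.card (X → X) := by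
        rw [← Nat.card_eq_fintype_card]
        rfl
      obtain ⟨i, j, hij, hFij⟩ := Fintype.exists_ne_map_eq_of_card_lt
        (fun j : Fin (Nat.card (X → X) + 1) =>
          lam hr ((structCon r).mk' (FreeMonoid.ofList (w.drop j))))
        (by rw [Fintype.card_fin]; omega)
      have hstep : ∃ w' : List X, w'.length < w.length ∧ ∃ s₁ : SM r, lam hr s₁ = 1 ∧
          (structCon r).mk' (FreeMonoid.ofList w) =
            (structCon r).mk' (FreeMonoid.ofList w') * s₁ := by
        rcases lt_or_gt_of_ne (fun h => hij (by exact_mod_cast Fin.ext (by exact_mod_cast h)))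
          (a := (i : ℕ)) (b := (j : ℕ)) with h | h
        · exact key i j h (by have := j.isLt; omega) hFij
        · exact key j i h (by have := i.isLt; omega) hFij.symm
      obtain ⟨w', hw', s₁, hs₁, heq⟩ := hstep
      obtain ⟨u, s₂, hu, hs₂, heq₂⟩ := IH w' (by omega)
      exact ⟨u, s₂ * s₁, hu, by rw [map_mul, hs₁, hs₂, one_mul],
        by rw [heq, heq₂, mul_assoc]⟩

private lemma decomp (hr : IsYB r) (hlnd : LeftNonDeg r) (m : SM r) :
    ∃ (u : List X) (s : SM r), u.length < Nat.card (X → X) ∧ lam hr s = 1 ∧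
      m = (structCon r).mk' (FreeMonoid.ofList u) * s := by
  induction m using Con.induction_on with
  | _ w =>
    obtain ⟨u, s, hu, hs, heq⟩ :=
      decomp_aux hr hlnd (FreeMonoid.toList w).length (FreeMonoid.toList w) le_rfl
    refine ⟨u, s, hu, hs, ?_⟩
    rw [show (w : SM r) = (structCon r).mk' w from rfl, ← FreeMonoid.ofList_toList w]
    exact heq

end Core

section Noeth

/-- Descent of (left) Noetherianity along a retraction pair. -/
private lemma noeth_descend {A B : Type*} [Ring A] [Ring B] (φ : B →+* A) (q : A →+ B)
    (hq1 : ∀ b, q (φ b) = b)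
    (hq2 : ∀ f b, q (f * φ b) = q f * b)
    (hA : IsNoetherianRing A) : IsNoetherianRing B := by
  rw [isNoetherianRing_iff, ← monotone_stabilizes_iff_noetherian] at hA ⊢
  intro I
  obtain ⟨n, hn⟩ := hA ⟨fun k => Ideal.span (φ '' I k), fun a b hab =>
    Ideal.span_mono (Set.image_mono (I.monotone hab))⟩
  refine ⟨n, fun m hm => ?_⟩
  have key : ∀ z, z ∈ Ideal.span (φ '' (I n : Set B)) → q z ∈ I n := by
    intro z hz
    rw [Ideal.span, Submodule.mem_span_set] at hz
    obtain ⟨c, hsupp, rfl⟩ := hz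
    rw [map_finsuppSum]
    refine Submodule.sum_mem _ fun a ha => ?_
    obtain ⟨b, hb, rfl⟩ := hsupp ha
    show q (c (φ b) • φ b) ∈ I n
    rw [smul_eq_mul, hq2]
    exact Ideal.mul_mem_left _ _ hb
  refine le_antisymm (I.monotone hm) ?_
  intro x hx
  have h3 : φ x ∈ Ideal.span (φ '' (I n : Set B)) := by
    have h4 : φ x ∈ Ideal.span (φ '' (I m : Set B)) := Ideal.subset_span ⟨x, hx, rfl⟩
    have h5 : Ideal.span (φ '' (I n : Set B)) = Ideal.span (φ '' (I m : Set B)) := hn m hm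
    rwa [h5]
  have := key _ h3
  rwa [hq1] at this

/-- Ascent of (left) Noetherianity along a module-finite ring map. -/
private lemma noeth_ascend {A B : Type*} [Ring A] [Ring B] (φ : B →+* A) {ι : Type}
    [Finite ι] (t : ι → A)
    (hgen : ∀ x : A, ∀ P : A → Prop, P 0 → (∀ y z, P y → P z → P (y + z)) →
      (∀ b i, P (φ b * t i)) → P x)
    (hB : IsNoetherianRing B) : IsNoetherianRing A := by
  letI : Module B A := Module.compHom A φ
  haveI : IsScalarTower B A A := ⟨fun b y z => by
    show (φ b * y) * z = φ b * (y * z)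
    rw [mul_assoc]⟩
  have hsm : ∀ (b : B) (a : A), b • a = φ b * a := fun _ _ => rfl
  have hspan : Submodule.span B (Set.range t) = ⊤ := by
    rw [eq_top_iff]
    rintro x -
    refine hgen x (· ∈ Submodule.span B (Set.range t)) (zero_mem _)
      (fun y z hy hz => add_mem hy hz) (fun b i => ?_)
    rw [← hsm]
    exact Submodule.smul_mem _ b (Submodule.subset_span ⟨i, rfl⟩)
  haveI : Module.Finite B A := ⟨by rw [← hspan]; exact Submodule.fg_span (Set.finite_range t)⟩
  haveI := hB
  haveI : IsNoetherian B A := inferInstance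
  exact isNoetherianRing_iff.mpr (isNoetherian_of_tower B ‹IsNoetherian B A›)

private lemma std_single_mem {α M : Type*} [Zero M] {p : α → Prop} {a : α} (h : p a) (c : M) :
    Finsupp.subtypeDomain p (Finsupp.single a c) = Finsupp.single ⟨a, h⟩ c := by
  classical
  ext x
  rw [Finsupp.subtypeDomain_apply]
  simp only [Finsupp.single_apply]
  refine if_congr ?_ rfl rfl
  exact ⟨fun e => Subtype.ext e, fun e => congrArg Subtype.val e⟩

private lemma std_single_not_mem {α M : Type*} [Zero M] {p : α → Prop} {a : α} (h : ¬ p a)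
    (c : M) : Finsupp.subtypeDomain p (Finsupp.single a c) = 0 := by
  classical
  ext x
  rw [Finsupp.subtypeDomain_apply]
  have : a ≠ (x : α) := fun e => h (e ▸ x.2)
  simp [Finsupp.single_apply, this]

end Noeth

/-- Let `(X,r)` be a finite left non-degenerate solution of the Yang–Baxter
equation, `K` a field, `M = M(X,r)` and `S = Soc(M)` its socle.  Then `K[M]` is right
Noetherian if and only if `K[S]` is right Noetherian. -/
theorem statement_8 {X : Type} [Fintype X] (r : X × X → X × X)
    (hr : IsYB r) (hlnd : LeftNonDeg r) (K : Type) [Field K] :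
    RightNoetherian (MonoidAlgebra K (SM r)) ↔
      RightNoetherian (MonoidAlgebra K ↥(Soc hr)) := by
  classical
  set φ₀ : MonoidAlgebra K ↥(Soc hr) →+* MonoidAlgebra K (SM r) :=
    MonoidAlgebra.mapDomainRingHom K (Soc hr).subtype with hφ₀def
  have hφ₀s : ∀ (a : ↥(Soc hr)) (c : K),
      φ₀ (MonoidAlgebra.single a c) = MonoidAlgebra.single (a : SM r) c := by
    intro a c
    exact MonoidAlgebra.mapDomain_single
  set q₀ : MonoidAlgebra K (SM r) →+ MonoidAlgebra K ↥(Soc hr) :=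
    { toFun := fun f => MonoidAlgebra.ofCoeff (Finsupp.subtypeDomain (· ∈ Soc hr) f.coeff),
      map_zero' := by
        rw [MonoidAlgebra.coeff_zero, Finsupp.subtypeDomain_zero, MonoidAlgebra.ofCoeff_zero],
      map_add' := fun f g => by
        rw [MonoidAlgebra.coeff_add, Finsupp.subtypeDomain_add, MonoidAlgebra.ofCoeff_add] }
      with hq₀def
  have hq₀app : ∀ f : MonoidAlgebra K (SM r),
      q₀ f = MonoidAlgebra.ofCoeff (Finsupp.subtypeDomain (· ∈ Soc hr) f.coeff) := fun f => rfl
  have hbrR : ∀ (g : SM r) (c : K),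
      (MonoidAlgebra.single g c : MonoidAlgebra K (SM r)) = MonoidAlgebra.ofCoeff (Finsupp.single g c) :=
    fun _ _ => rfl
  have hbrS : ∀ (g : ↥(Soc hr)) (c : K),
      (MonoidAlgebra.single g c : MonoidAlgebra K ↥(Soc hr)) = MonoidAlgebra.ofCoeff (Finsupp.single g c) :=
    fun _ _ => rfl
  have hq1R : ∀ b, q₀ (φ₀ b) = b := by
    intro b
    induction b using MonoidAlgebra.induction with
    | zero => rw [map_zero, map_zero]
    | _ a c f haf hc ih =>
      rw [map_add, map_add, ih, hφ₀s, hq₀app, MonoidAlgebra.coeff_single, std_single_mem a.2,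
          MonoidAlgebra.ofCoeff_single]
  have hq2R : ∀ (b : MonoidAlgebra K ↥(Soc hr)) (f : MonoidAlgebra K (SM r)),
      q₀ (φ₀ b * f) = b * q₀ f := by
    intro b
    induction b using MonoidAlgebra.induction with
    | zero =>
      intro f
      rw [map_zero, zero_mul, map_zero, zero_mul]
    | _ a c b' hab hc ih =>
      intro f
      rw [map_add, add_mul, map_add, add_mul, ih]
      congr 1
      induction f using MonoidAlgebra.induction with
      | zero => rw [mul_zero, map_zero, mul_zero]
      | _ m k f' hmf hk ihf =>
        rw [mul_add, map_add, map_add, mul_add, ihf]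
        congr 1
        rw [hφ₀s, MonoidAlgebra.single_mul_single, hq₀app, hq₀app, MonoidAlgebra.coeff_single,
            MonoidAlgebra.coeff_single]
        by_cases hm : m ∈ Soc hr
        · have hms : (a : SM r) * m ∈ Soc hr := mul_mem a.2 hm
          rw [std_single_mem hms, std_single_mem hm, MonoidAlgebra.ofCoeff_single,
            MonoidAlgebra.ofCoeff_single, MonoidAlgebra.single_mul_single]
          congr 1
        · have hms : ¬ ((a : SM r) * m ∈ Soc hr) := by
            intro hin
            apply hm
            have h1 : lam hr (a : SM r) = 1 := MonoidHom.mem_mker.mp a.2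
            have h2 : lam hr ((a : SM r) * m) = 1 := MonoidHom.mem_mker.mp hin
            rw [map_mul, h1, one_mul] at h2
            exact MonoidHom.mem_mker.mpr h2
          rw [std_single_not_mem hms, std_single_not_mem hm, MonoidAlgebra.ofCoeff_zero, mul_zero]
  set ψ : (MonoidAlgebra K ↥(Soc hr))ᵐᵒᵖ →+* (MonoidAlgebra K (SM r))ᵐᵒᵖ :=
    RingHom.op φ₀ with hψdef
  have hψapp : ∀ b, ψ (MulOpposite.op b) = MulOpposite.op (φ₀ b) := fun b => rfl
  set qop : (MonoidAlgebra K (SM r))ᵐᵒᵖ →+ (MonoidAlgebra K ↥(Soc hr))ᵐᵒᵖ :=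
    { toFun := fun x => MulOpposite.op (q₀ x.unop),
      map_zero' := by
        show MulOpposite.op (q₀ (MulOpposite.unop 0)) = 0
        rw [MulOpposite.unop_zero, map_zero, MulOpposite.op_zero],
      map_add' := fun x y => by
        show MulOpposite.op (q₀ (MulOpposite.unop (x + y))) = _
        rw [MulOpposite.unop_add, map_add, MulOpposite.op_add] } with hqopdef
  have hqopapp : ∀ x, qop x = MulOpposite.op (q₀ x.unop) := fun x => rfl
  constructor
  · intro h
    refine noeth_descend ψ qop ?_ ?_ h
    · intro b
      rw [hqopapp]
      have h1 : MulOpposite.unop (ψ b) = φ₀ (MulOpposite.unop b) := rfl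
      rw [h1, hq1R, MulOpposite.op_unop]
    · intro f b
      rw [hqopapp, hqopapp]
      have h1 : MulOpposite.unop (f * ψ b) = φ₀ (MulOpposite.unop b) * MulOpposite.unop f :=
        rfl
      rw [h1, hq2R, MulOpposite.op_mul, MulOpposite.op_unop]
  · intro h
    have hNpos : 0 < Nat.card (X → X) := by
      haveI : Nonempty (X → X) := ⟨id⟩
      exact Nat.card_pos
    let ι : Type := Σ k : Fin (Nat.card (X → X)), (Fin (k : ℕ) → X)
    haveI : Finite ι := inferInstance
    let t : ι → (MonoidAlgebra K (SM r))ᵐᵒᵖ := fun i =>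
      MulOpposite.op (MonoidAlgebra.single
        ((structCon r).mk' (FreeMonoid.ofList (List.ofFn i.2)) : SM r) (1 : K))
    refine noeth_ascend ψ t ?_ h
    intro x P h0 hadd hmul
    have hall : ∀ f : MonoidAlgebra K (SM r), P (MulOpposite.op f) := by
      intro f
      induction f using MonoidAlgebra.induction with
      | zero => rw [MulOpposite.op_zero]; exact h0
      | _ m k f' hmf hk ih =>
        rw [MulOpposite.op_add]
        refine hadd _ _ ?_ ih
        obtain ⟨u, s, hu, hs, heq⟩ := decomp hr hlnd m
        have hsmem : s ∈ Soc hr := MonoidHom.mem_mker.mpr hs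
        have hsingle : (MonoidAlgebra.single m k : MonoidAlgebra K (SM r)) =
            MonoidAlgebra.single ((structCon r).mk' (FreeMonoid.ofList u)) (1 : K) *
              MonoidAlgebra.single s k := by
          rw [MonoidAlgebra.single_mul_single, one_mul, ← heq]
        have ht : t ⟨⟨u.length, hu⟩, u.get⟩ =
            MulOpposite.op (MonoidAlgebra.single
              ((structCon r).mk' (FreeMonoid.ofList (List.ofFn u.get)) : SM r) (1 : K)) := rfl
        have hψs : ψ (MulOpposite.op (MonoidAlgebra.single (⟨s, hsmem⟩ : ↥(Soc hr)) k)) =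
            MulOpposite.op (MonoidAlgebra.single s k : MonoidAlgebra K (SM r)) := by
          rw [hψapp, hφ₀s]
        have hrepr : MulOpposite.op (MonoidAlgebra.single m k : MonoidAlgebra K (SM r)) =
            ψ (MulOpposite.op (MonoidAlgebra.single (⟨s, hsmem⟩ : ↥(Soc hr)) k)) *
              t ⟨⟨u.length, hu⟩, u.get⟩ := by
          rw [hsingle, MulOpposite.op_mul, hψs, ht, List.ofFn_get]
        have hPf : P (MulOpposite.op (MonoidAlgebra.single m k : MonoidAlgebra K (SM r))) := by
          rw [hrepr]
          exact hmul _ _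
        exact hPf
    rw [← MulOpposite.op_unop x]
    exact hall _
end YBE
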